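/- Suppose E : ℝᴺ → ℝ is convex and continuous and ρᵏ_j > 0 for all j. Then the discrete regularized JKO problem — minimize F(ρ, m) over all pairs (ρ, m) with ρ_j > 0 for all j satisfying the discrete continuity constraint with data ρᵏ — admits a minimizer, and this minimizer is unique; in particular the minimizing density ρ* satisfies min_j ρ*_j > 0. -/

import Mathlib

/-- The discrete continuity constraint with data `ρᵏ` and zero-flux boundary values:
`m_0 = m_N = 0` and `ρ_j − ρᵏ_j + (m_j − m_{j−1})/Δx = 0` for `1 ≤ j ≤ N`
(densities are indexed by `Fin N`, fluxes by `Fin (N+1)`). -/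
def JKOFeasible (N : ℕ) (Δx : ℝ) (ρk : Fin N → ℝ)
    (p : (Fin N → ℝ) × (Fin (N + 1) → ℝ)) : Prop :=
  (∀ j, 0 < p.1 j) ∧ p.2 0 = 0 ∧ p.2 (Fin.last N) = 0 ∧
    ∀ j : Fin N, p.1 j - ρk j + (p.2 j.succ - p.2 j.castSucc) / Δx = 0

/-- The discrete regularized JKO objective
`F(ρ, m) = Σ_{j=1}^{N−1} [2 m_j²/(ρ_j + ρ_{j+1})
  + (β⁻²τ²/Δx²)(log ρ_{j+1} − log ρ_j)²(ρ_j + ρ_{j+1})/2] Δx + 2τ E(ρ)`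
(with the paper's index `j` corresponding to the Lean density index `i = j − 1`,
so that the interior flux `m_j` is the entry of `m : Fin (N+1) → ℝ` at `i + 1`). -/
noncomputable def JKOObjective (N : ℕ) (Δx τ β : ℝ) (E : (Fin N → ℝ) → ℝ)
    (p : (Fin N → ℝ) × (Fin (N + 1) → ℝ)) : ℝ :=
  (∑ i : Fin N, if h : (i : ℕ) + 1 < N then
      2 * (p.2 ⟨(i : ℕ) + 1, by omega⟩) ^ 2 / (p.1 i + p.1 ⟨(i : ℕ) + 1, h⟩) +
        β⁻¹ ^ 2 * τ ^ 2 / Δx ^ 2 *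
          (Real.log (p.1 ⟨(i : ℕ) + 1, h⟩) - Real.log (p.1 i)) ^ 2 *
          (p.1 i + p.1 ⟨(i : ℕ) + 1, h⟩) / 2
    else 0) * Δx + 2 * τ * E p.1

/-!
Both summands of an edge cost are perspectives `(a, x) ↦ a f(x / a)` of convex functions:
`2m²/(a+b)` of `x ↦ 2x²`, and `(log b - log a)²(a+b) = a ψ(b/a)` of the strictly convex
`ψ t = (1 + t) log² t`. Perspectives of convex functions are jointly convex, so the objective is
convex on the convex feasible set. It is even strictly convex there: the flux is determined by
the density, and two distinct feasible densities have the same mass, so they cannot have the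
same ratios `ρ_{j+1}/ρ_j` on every edge; on an edge where the ratios differ the perspective of
`ψ` is strictly convex. Hence there is at most one minimizer.

For existence, a bound `(log b - log a)²(a+b) ≤ T` forces `b ≥ a exp(-√(T/a))`. Starting from an
index with `ρ_j ≥ M/N` and iterating along the chain bounds every density in a sublevel set of
the objective away from `0`, so the sublevel set is compact and the continuous objective attains
its minimum on it.
-/

open Real Set

lemma ConvexOn.perspective_add_le {f : ℝ → ℝ} {s : Set ℝ} (hf : ConvexOn ℝ s f)
    {a a' x x' : ℝ} (ha : 0 < a) (ha' : 0 < a') (hx : x / a ∈ s) (hx' : x' / a' ∈ s) :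
    (a + a') * f ((x + x') / (a + a')) ≤ a * f (x / a) + a' * f (x' / a') := by
  have hA : 0 < a + a' := by positivity
  have key := hf.2 hx hx' (by positivity : 0 ≤ a / (a + a'))
    (by positivity : 0 ≤ a' / (a + a')) (by rw [← add_div, div_self hA.ne'])
  simp only [smul_eq_mul] at key
  calc (a + a') * f ((x + x') / (a + a'))
      = (a + a') * f (a / (a + a') * (x / a) + a' / (a + a') * (x' / a')) := by
        congr 2; field_simp
    _ ≤ (a + a') * (a / (a + a') * f (x / a) + a' / (a + a') * f (x' / a')) := by gcongr
    _ = a * f (x / a) + a' * f (x' / a') := by field_simp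

lemma StrictConvexOn.perspective_add_lt {f : ℝ → ℝ} {s : Set ℝ} (hf : StrictConvexOn ℝ s f)
    {a a' x x' : ℝ} (ha : 0 < a) (ha' : 0 < a') (hx : x / a ∈ s) (hx' : x' / a' ∈ s)
    (hne : x / a ≠ x' / a') :
    (a + a') * f ((x + x') / (a + a')) < a * f (x / a) + a' * f (x' / a') := by
  have hA : 0 < a + a' := by positivity
  have key := hf.2 hx hx' hne (by positivity : 0 < a / (a + a'))
    (by positivity : 0 < a' / (a + a')) (by rw [← add_div, div_self hA.ne'])
  simp only [smul_eq_mul] at key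
  calc (a + a') * f ((x + x') / (a + a'))
      = (a + a') * f (a / (a + a') * (x / a) + a' / (a + a') * (x' / a')) := by
        congr 2; field_simp
    _ < (a + a') * (a / (a + a') * f (x / a) + a' / (a + a') * f (x' / a')) := by gcongr
    _ = a * f (x / a) + a' * f (x' / a') := by field_simp

lemma strictConvexOn_one_add_mul_log_sq :
    StrictConvexOn ℝ (Ioi 0) fun t : ℝ => (1 + t) * log t ^ 2 := by
  have hderiv : ∀ t : ℝ, 0 < t → HasDerivAt (fun t : ℝ => (1 + t) * log t ^ 2)
      (log t ^ 2 + 2 * log t + 2 * log t / t) t := by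
    intro t ht
    refine (((hasDerivAt_id' t).const_add 1).fun_mul
      ((hasDerivAt_log ht.ne').fun_pow 2)).congr_deriv ?_
    field_simp
    ring
  have hderiv2 : ∀ t : ℝ, 0 < t →
      HasDerivAt (fun t : ℝ => log t ^ 2 + 2 * log t + 2 * log t / t)
        (2 * ((t - 1) * log t + t + 1) / t ^ 2) t := by
    intro t ht
    have hlog := hasDerivAt_log ht.ne'
    refine (((hlog.fun_pow 2).fun_add (hlog.const_mul 2)).fun_add
      ((hlog.const_mul 2).fun_div (hasDerivAt_id' t) ht.ne')).congr_deriv ?_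
    field_simp
    ring
  refine strictConvexOn_of_deriv2_pos (convex_Ioi 0)
    (fun t ht => (hderiv t ht).continuousAt.continuousWithinAt) fun t ht => ?_
  rw [interior_Ioi, mem_Ioi] at ht
  have hdt : deriv (fun t : ℝ => (1 + t) * log t ^ 2) =ᶠ[nhds t]
      fun t => log t ^ 2 + 2 * log t + 2 * log t / t :=
    Filter.eventually_of_mem (Ioi_mem_nhds ht) fun s hs => (hderiv s hs).deriv
  rw [Function.iterate_succ_apply, Function.iterate_one, hdt.deriv_eq, (hderiv2 t ht).deriv]
  have : 0 ≤ (t - 1) * log t := by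
    rcases le_total 1 t with h | h
    · exact mul_nonneg (by linarith) (log_nonneg h)
    · exact mul_nonneg_of_nonpos_of_nonpos (by linarith) (log_nonpos ht.le h)
  positivity

lemma add_sq_div_add_le {m m' s s' : ℝ} (hs : 0 < s) (hs' : 0 < s') :
    (m + m') ^ 2 / (s + s') ≤ m ^ 2 / s + m' ^ 2 / s' := by
  have key := (even_two.convexOn_pow (𝕜 := ℝ)).perspective_add_le hs hs'
    (mem_univ (m / s)) (mem_univ (m' / s'))
  have : 0 < s + s' := by positivity
  calc (m + m') ^ 2 / (s + s') = (s + s') * ((m + m') / (s + s')) ^ 2 := by field_simp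
    _ ≤ s * (m / s) ^ 2 + s' * (m' / s') ^ 2 := key
    _ = m ^ 2 / s + m' ^ 2 / s' := by field_simp

lemma sq_log_sub_log_mul_add_eq {a b : ℝ} (ha : 0 < a) (hb : 0 < b) :
    (log b - log a) ^ 2 * (a + b) = a * ((1 + b / a) * log (b / a) ^ 2) := by
  rw [log_div hb.ne' ha.ne']
  field_simp

lemma sq_log_sub_log_mul_add_le {a b a' b' : ℝ} (ha : 0 < a) (hb : 0 < b) (ha' : 0 < a')
    (hb' : 0 < b') :
    (log (b + b') - log (a + a')) ^ 2 * (a + a' + (b + b'))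
      ≤ (log b - log a) ^ 2 * (a + b) + (log b' - log a') ^ 2 * (a' + b') := by
  rw [sq_log_sub_log_mul_add_eq (by positivity) (by positivity),
    sq_log_sub_log_mul_add_eq ha hb, sq_log_sub_log_mul_add_eq ha' hb']
  exact strictConvexOn_one_add_mul_log_sq.convexOn.perspective_add_le ha ha'
    (div_pos hb ha) (div_pos hb' ha')

lemma sq_log_sub_log_mul_add_lt {a b a' b' : ℝ} (ha : 0 < a) (hb : 0 < b) (ha' : 0 < a')
    (hb' : 0 < b') (hne : b / a ≠ b' / a') :
    (log (b + b') - log (a + a')) ^ 2 * (a + a' + (b + b'))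
      < (log b - log a) ^ 2 * (a + b) + (log b' - log a') ^ 2 * (a' + b') := by
  rw [sq_log_sub_log_mul_add_eq (by positivity) (by positivity),
    sq_log_sub_log_mul_add_eq ha hb, sq_log_sub_log_mul_add_eq ha' hb']
  exact strictConvexOn_one_add_mul_log_sq.perspective_add_lt ha ha'
    (div_pos hb ha) (div_pos hb' ha') hne

noncomputable def jkoEdgeCost (C m a b : ℝ) : ℝ :=
  2 * m ^ 2 / (a + b) + C * (log b - log a) ^ 2 * (a + b) / 2

section EdgeCost

variable {C m a b m' a' b' t t' : ℝ}

lemma jkoEdgeCost_nonneg (hC : 0 ≤ C) (ha : 0 < a) (hb : 0 < b) : 0 ≤ jkoEdgeCost C m a b := by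
  have : 0 < a + b := by positivity
  unfold jkoEdgeCost
  positivity

lemma mul_sq_log_sub_log_mul_add_le_jkoEdgeCost (ha : 0 < a) (hb : 0 < b) :
    C * (log b - log a) ^ 2 * (a + b) / 2 ≤ jkoEdgeCost C m a b := by
  have : 0 < a + b := by positivity
  have : 0 ≤ 2 * m ^ 2 / (a + b) := by positivity
  unfold jkoEdgeCost
  linarith

lemma jkoEdgeCost_mul (ht : 0 < t) (ha : 0 < a) (hb : 0 < b) :
    jkoEdgeCost C (t * m) (t * a) (t * b) = t * jkoEdgeCost C m a b := by
  have : 0 < a + b := by positivity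
  unfold jkoEdgeCost
  rw [log_mul ht.ne' ha.ne', log_mul ht.ne' hb.ne']
  field_simp
  ring

lemma jkoEdgeCost_add_le (hC : 0 ≤ C) (ha : 0 < a) (hb : 0 < b) (ha' : 0 < a') (hb' : 0 < b') :
    jkoEdgeCost C (m + m') (a + a') (b + b') ≤ jkoEdgeCost C m a b + jkoEdgeCost C m' a' b' := by
  have hkin := add_sq_div_add_le (m := m) (m' := m') (add_pos ha hb) (add_pos ha' hb')
  have hfis := mul_le_mul_of_nonneg_left (sq_log_sub_log_mul_add_le ha hb ha' hb') hC
  unfold jkoEdgeCost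
  linear_combination 2 * hkin + hfis / 2

lemma jkoEdgeCost_add_lt (hC : 0 < C) (ha : 0 < a) (hb : 0 < b) (ha' : 0 < a') (hb' : 0 < b')
    (hne : b / a ≠ b' / a') :
    jkoEdgeCost C (m + m') (a + a') (b + b') < jkoEdgeCost C m a b + jkoEdgeCost C m' a' b' := by
  have hkin := add_sq_div_add_le (m := m) (m' := m') (add_pos ha hb) (add_pos ha' hb')
  have hfis := mul_lt_mul_of_pos_left (sq_log_sub_log_mul_add_lt ha hb ha' hb' hne) hC
  unfold jkoEdgeCost
  linear_combination 2 * hkin + hfis / 2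

lemma jkoEdgeCost_combo_le (hC : 0 ≤ C) (ha : 0 < a) (hb : 0 < b) (ha' : 0 < a') (hb' : 0 < b')
    (ht : 0 < t) (ht' : 0 < t') :
    jkoEdgeCost C (t * m + t' * m') (t * a + t' * a') (t * b + t' * b')
      ≤ t * jkoEdgeCost C m a b + t' * jkoEdgeCost C m' a' b' := by
  rw [← jkoEdgeCost_mul ht ha hb, ← jkoEdgeCost_mul ht' ha' hb']
  exact jkoEdgeCost_add_le hC (by positivity) (by positivity) (by positivity) (by positivity)

lemma jkoEdgeCost_combo_lt (hC : 0 < C) (ha : 0 < a) (hb : 0 < b) (ha' : 0 < a') (hb' : 0 < b')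
    (ht : 0 < t) (ht' : 0 < t') (hne : b / a ≠ b' / a') :
    jkoEdgeCost C (t * m + t' * m') (t * a + t' * a') (t * b + t' * b')
      < t * jkoEdgeCost C m a b + t' * jkoEdgeCost C m' a' b' := by
  rw [← jkoEdgeCost_mul ht ha hb, ← jkoEdgeCost_mul ht' ha' hb']
  refine jkoEdgeCost_add_lt hC (by positivity) (by positivity) (by positivity) (by positivity) ?_
  rwa [mul_div_mul_left _ _ ht.ne', mul_div_mul_left _ _ ht'.ne']

end EdgeCost

noncomputable def jkoEdgeTerm (N : ℕ) (C : ℝ) (p : (Fin N → ℝ) × (Fin (N + 1) → ℝ))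
    (i : Fin N) : ℝ :=
  if h : (i : ℕ) + 1 < N then
    jkoEdgeCost C (p.2 ⟨(i : ℕ) + 1, by omega⟩) (p.1 i) (p.1 ⟨(i : ℕ) + 1, h⟩)
  else 0

lemma JKOObjective_eq_sum_jkoEdgeTerm (N : ℕ) (Δx τ β : ℝ) (E : (Fin N → ℝ) → ℝ)
    (p : (Fin N → ℝ) × (Fin (N + 1) → ℝ)) :
    JKOObjective N Δx τ β E p
      = (∑ i, jkoEdgeTerm N (β⁻¹ ^ 2 * τ ^ 2 / Δx ^ 2) p i) * Δx + 2 * τ * E p.1 :=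
  rfl

section EdgeTerm

variable {N : ℕ} {C : ℝ} {p q : (Fin N → ℝ) × (Fin (N + 1) → ℝ)}

lemma jkoEdgeTerm_nonneg (hC : 0 ≤ C) (hp : ∀ j, 0 < p.1 j) (i : Fin N) :
    0 ≤ jkoEdgeTerm N C p i := by
  unfold jkoEdgeTerm
  split_ifs
  · exact jkoEdgeCost_nonneg hC (hp _) (hp _)
  · exact le_rfl

lemma sum_jkoEdgeTerm_combo_lt (hC : 0 < C) (hp : ∀ j, 0 < p.1 j) (hq : ∀ j, 0 < q.1 j)
    {t t' : ℝ} (ht : 0 < t) (ht' : 0 < t') (i : Fin N) (hi : (i : ℕ) + 1 < N)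
    (hne : p.1 ⟨(i : ℕ) + 1, hi⟩ / p.1 i ≠ q.1 ⟨(i : ℕ) + 1, hi⟩ / q.1 i) :
    ∑ j, jkoEdgeTerm N C (t • p + t' • q) j
      < t * ∑ j, jkoEdgeTerm N C p j + t' * ∑ j, jkoEdgeTerm N C q j := by
  rw [Finset.mul_sum, Finset.mul_sum, ← Finset.sum_add_distrib]
  refine Finset.sum_lt_sum (fun j _ => ?_) ⟨i, Finset.mem_univ i, ?_⟩
  · unfold jkoEdgeTerm
    split_ifs
    · exact jkoEdgeCost_combo_le hC.le (hp _) (hp _) (hq _) (hq _) ht ht'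
    · simp
  · simp only [jkoEdgeTerm, dif_pos hi]
    exact jkoEdgeCost_combo_lt hC (hp _) (hp _) (hq _) (hq _) ht ht' hne

end EdgeTerm

lemma Fin.partialSum_last {M : Type*} [AddCommMonoid M] {n : ℕ} (f : Fin n → M) :
    Fin.partialSum f (Fin.last n) = ∑ i, f i := by
  simp [Fin.partialSum, List.take_of_length_le, List.sum_ofFn]

noncomputable def jkoFlux (N : ℕ) (Δx : ℝ) (ρk ρ : Fin N → ℝ) : Fin (N + 1) → ℝ :=
  Δx • Fin.partialSum (ρk - ρ)

section Feasibility

variable {N : ℕ} {Δx : ℝ} {ρk : Fin N → ℝ} {p q : (Fin N → ℝ) × (Fin (N + 1) → ℝ)}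

lemma continuous_jkoFlux : Continuous (jkoFlux N Δx ρk) := by
  refine continuous_pi fun j => continuous_const.mul ?_
  induction j using Fin.induction with
  | zero => simpa using continuous_const
  | succ j ih =>
    simp only [Fin.partialSum_succ]
    exact ih.add (continuous_const.sub (continuous_apply j))

lemma JKOFeasible.snd_eq_jkoFlux (hΔx : Δx ≠ 0) (hp : JKOFeasible N Δx ρk p) :
    p.2 = jkoFlux N Δx ρk p.1 := by
  obtain ⟨-, h0, -, hcont⟩ := hp
  funext j
  induction j using Fin.induction with
  | zero => simp [jkoFlux, h0]
  | succ j ih =>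
    have := hcont j
    simp only [jkoFlux, Pi.smul_apply, smul_eq_mul, Fin.partialSum_succ, Pi.sub_apply] at ih ⊢
    field_simp at this
    linarith

lemma JKOFeasible.sum_fst_eq (hΔx : Δx ≠ 0) (hp : JKOFeasible N Δx ρk p) :
    ∑ j, p.1 j = ∑ j, ρk j := by
  have hlast := hp.2.2.1
  rw [hp.snd_eq_jkoFlux hΔx] at hlast
  simp only [jkoFlux, Pi.smul_apply, smul_eq_mul, Fin.partialSum_last, Pi.sub_apply,
    Finset.sum_sub_distrib, mul_eq_zero, hΔx, false_or] at hlast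
  linarith

lemma JKOFeasible.fst_ne_of_ne (hΔx : Δx ≠ 0) (hp : JKOFeasible N Δx ρk p)
    (hq : JKOFeasible N Δx ρk q) (hpq : p ≠ q) : p.1 ≠ q.1 := fun h =>
  hpq (Prod.ext h (by rw [hp.snd_eq_jkoFlux hΔx, hq.snd_eq_jkoFlux hΔx, h]))

lemma jkoFeasible_jkoFlux (hΔx : Δx ≠ 0) {ρ : Fin N → ℝ} (hρ : ∀ j, 0 < ρ j)
    (hmass : ∑ j, ρ j = ∑ j, ρk j) : JKOFeasible N Δx ρk (ρ, jkoFlux N Δx ρk ρ) := by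
  refine ⟨hρ, by simp [jkoFlux], ?_, fun j => ?_⟩
  · simp [jkoFlux, Fin.partialSum_last, Finset.sum_sub_distrib, hmass]
  · simp only [jkoFlux, Pi.smul_apply, smul_eq_mul, Fin.partialSum_succ, Pi.sub_apply]
    field_simp
    ring

lemma convex_setOf_jkoFeasible : Convex ℝ {p | JKOFeasible N Δx ρk p} := by
  rintro p ⟨hp, hp0, hpN, hpc⟩ q ⟨hq, hq0, hqN, hqc⟩ t t' ht ht' htt'
  refine ⟨fun j => (convex_Ioi (0 : ℝ)) (hp j) (hq j) ht ht' htt', ?_, ?_, fun j => ?_⟩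
  · simp [hp0, hq0]
  · simp [hpN, hqN]
  · simp only [Prod.fst_add, Prod.snd_add, Prod.smul_fst, Prod.smul_snd, Pi.add_apply,
      Pi.smul_apply, smul_eq_mul]
    linear_combination t * hpc j + t' * hqc j + ρk j * htt'

end Feasibility

lemma exists_div_ne_of_sum_eq {N : ℕ} {ρ ρ' : Fin N → ℝ} (hρ : ∀ j, 0 < ρ j)
    (hρ' : ∀ j, 0 < ρ' j) (hsum : ∑ j, ρ j = ∑ j, ρ' j) (hne : ρ ≠ ρ') :
    ∃ i : Fin N, ∃ hi : (i : ℕ) + 1 < N,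
      ρ ⟨(i : ℕ) + 1, hi⟩ / ρ i ≠ ρ' ⟨(i : ℕ) + 1, hi⟩ / ρ' i := by
  by_contra! hall
  obtain ⟨j₀, -⟩ := Function.ne_iff.mp hne
  have hN : 0 < N := j₀.pos
  set c := ρ ⟨0, hN⟩ / ρ' ⟨0, hN⟩
  have hratio : ∀ k (hk : k < N), ρ ⟨k, hk⟩ = c * ρ' ⟨k, hk⟩ := by
    intro k
    induction k with
    | zero => intro hk; exact (div_mul_cancel₀ _ (hρ' _).ne').symm
    | succ k ih =>
      intro hk
      have hadj : ρ ⟨k + 1, hk⟩ / ρ ⟨k, by omega⟩ = ρ' ⟨k + 1, hk⟩ / ρ' ⟨k, by omega⟩ :=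
        hall ⟨k, by omega⟩ hk
      rw [div_eq_div_iff (hρ _).ne' (hρ' _).ne', ih (by omega)] at hadj
      exact mul_right_cancel₀ (hρ' ⟨k, by omega⟩).ne' (by linarith)
  have hc : c = 1 := by
    have hpos : 0 < ∑ j, ρ' j := Finset.sum_pos (fun j _ => hρ' j) ⟨j₀, Finset.mem_univ _⟩
    rw [show ∑ j, ρ j = c * ∑ j, ρ' j by
      rw [Finset.mul_sum]; exact Finset.sum_congr rfl fun j _ => hratio j j.2] at hsum
    exact mul_right_cancel₀ hpos.ne' (by linarith)
  exact hne (funext fun j => by rw [hratio j j.2, hc, one_mul])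

lemma strictConvexOn_JKOObjective {N : ℕ} {Δx τ β : ℝ} (hΔx : 0 < Δx) (hτ : 0 < τ)
    (hβ : 0 < β) {E : (Fin N → ℝ) → ℝ} (hE : ConvexOn ℝ univ E) (ρk : Fin N → ℝ) :
    StrictConvexOn ℝ {p | JKOFeasible N Δx ρk p} (JKOObjective N Δx τ β E) := by
  refine ⟨convex_setOf_jkoFeasible, fun p hp q hq hpq t t' ht ht' htt' => ?_⟩
  obtain ⟨i, hi, hne⟩ := exists_div_ne_of_sum_eq hp.1 hq.1
    ((hp.sum_fst_eq hΔx.ne').trans (hq.sum_fst_eq hΔx.ne').symm) (hp.fst_ne_of_ne hΔx.ne' hq hpq)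
  have hedges := sum_jkoEdgeTerm_combo_lt (C := β⁻¹ ^ 2 * τ ^ 2 / Δx ^ 2) (by positivity)
    hp.1 hq.1 ht ht' i hi hne
  have henergy : E (t • p.1 + t' • q.1) ≤ t * E p.1 + t' * E q.1 :=
    hE.2 (mem_univ _) (mem_univ _) ht.le ht'.le htt'
  simp only [JKOObjective_eq_sum_jkoEdgeTerm, smul_eq_mul, Prod.fst_add, Prod.smul_fst]
  linear_combination Δx * hedges + 2 * τ * henergy

lemma iterate_le_of_forall_adjacent {N : ℕ} {φ : ℝ → ℝ} (hφpos : ∀ v, 0 < v → 0 < φ v)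
    (hφle : ∀ v, 0 < v → φ v ≤ v) (hφmono : MonotoneOn φ (Ioi 0)) {ρ : Fin N → ℝ}
    (hadj : ∀ i j : Fin N, (i : ℕ) + 1 = j ∨ (j : ℕ) + 1 = i → φ (ρ i) ≤ ρ j)
    {v : ℝ} (hv : 0 < v) {a : Fin N} (ha : v ≤ ρ a) (j : Fin N) : φ^[N - 1] v ≤ ρ j := by
  have hpos : ∀ d, 0 < φ^[d] v := Function.Iterate.rec (fun w => 0 < w) hv hφpos
  suffices key : ∀ d, ∀ j : Fin N, (j : ℕ) ≤ a + d → (a : ℕ) ≤ j + d → φ^[d] v ≤ ρ j from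
    key (N - 1) j (by omega) (by omega)
  intro d
  induction d with
  | zero =>
    intro j h₁ h₂
    rwa [show j = a from Fin.ext (by omega)]
  | succ d ih =>
    intro j h₁ h₂
    rw [Function.iterate_succ_apply']
    by_cases hj : (j : ℕ) ≤ a + d ∧ (a : ℕ) ≤ j + d
    · exact (hφle _ (hpos d)).trans (ih j hj.1 hj.2)
    obtain ⟨k, hk₁, hk₂, hkj⟩ : ∃ k : Fin N, (k : ℕ) ≤ a + d ∧ (a : ℕ) ≤ k + d ∧
        ((k : ℕ) + 1 = j ∨ (j : ℕ) + 1 = k) := by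
      by_cases haj : (a : ℕ) < j
      · exact ⟨⟨j - 1, by omega⟩, by simp; omega, by simp; omega, by simp; omega⟩
      · exact ⟨⟨j + 1, by omega⟩, by simp; omega, by simp; omega, by simp⟩
    have hk := ih k hk₁ hk₂
    exact (hφmono (hpos d) ((hpos d).trans_le hk) hk).trans (hadj k j hkj)

noncomputable def fisherFloor (T v : ℝ) : ℝ := v * exp (-√(T / v))

lemma fisherFloor_pos {T v : ℝ} (hv : 0 < v) : 0 < fisherFloor T v :=
  mul_pos hv (exp_pos _)

lemma fisherFloor_le_self {T v : ℝ} (hv : 0 < v) : fisherFloor T v ≤ v :=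
  mul_le_of_le_one_right hv.le (exp_le_one_iff.2 (neg_nonpos.2 (sqrt_nonneg _)))

lemma fisherFloor_monotoneOn {T : ℝ} (hT : 0 ≤ T) : MonotoneOn (fisherFloor T) (Ioi 0) := by
  intro u (hu : 0 < u) v (hv : 0 < v) huv
  unfold fisherFloor
  gcongr

lemma fisherFloor_le_of_sq_log_sub_log_mul_add_le {T a b : ℝ} (ha : 0 < a) (hb : 0 < b)
    (h : (log b - log a) ^ 2 * (a + b) ≤ T) : fisherFloor T a ≤ b := by
  rcases le_total a b with hab | hba
  · exact (fisherFloor_le_self ha).trans hab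
  have hgap : log a - log b ≤ √(T / a) := by
    rw [← sqrt_sq (sub_nonneg.2 (log_le_log hb hba))]
    refine sqrt_le_sqrt ((le_div_iff₀ ha).2 ?_)
    nlinarith [sq_nonneg (log a - log b)]
  calc fisherFloor T a = exp (log a - √(T / a)) := by
        rw [fisherFloor, sub_eq_add_neg, exp_add, exp_log ha]
    _ ≤ exp (log b) := exp_le_exp.2 (by linarith)
    _ = b := exp_log hb

lemma iterate_fisherFloor_le {N : ℕ} {ρ : Fin N → ℝ} (hρ : ∀ j, 0 < ρ j) {T : ℝ} (hT : 0 ≤ T)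
    (hfis : ∀ (i : Fin N) (hi : (i : ℕ) + 1 < N),
      (log (ρ ⟨(i : ℕ) + 1, hi⟩) - log (ρ i)) ^ 2 * (ρ i + ρ ⟨(i : ℕ) + 1, hi⟩) ≤ T)
    (j : Fin N) : (fisherFloor T)^[N - 1] ((∑ i, ρ i) / N) ≤ ρ j := by
  have hN : (0 : ℝ) < N := by exact_mod_cast j.pos
  have hM : 0 < ∑ i, ρ i := Finset.sum_pos (fun i _ => hρ i) ⟨j, Finset.mem_univ j⟩
  obtain ⟨a, -, ha⟩ := Finset.exists_le_of_sum_le (Finset.univ_nonempty_iff.2 ⟨j⟩)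
    (f := fun _ => (∑ i, ρ i) / N) (g := ρ) (by simp [mul_div_cancel₀ _ hN.ne'])
  refine iterate_le_of_forall_adjacent (fun _ => fisherFloor_pos) (fun _ => fisherFloor_le_self)
    (fisherFloor_monotoneOn hT) ?_ (div_pos hM hN) ha j
  rintro i k (hik | hki)
  · rw [show k = ⟨(i : ℕ) + 1, by omega⟩ from Fin.ext hik.symm]
    exact fisherFloor_le_of_sq_log_sub_log_mul_add_le (hρ _) (hρ _) (hfis i _)
  · rw [show i = ⟨(k : ℕ) + 1, by omega⟩ from Fin.ext hki.symm]
    refine fisherFloor_le_of_sq_log_sub_log_mul_add_le (hρ _) (hρ _) ?_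
    rw [← neg_sub, neg_sq, add_comm (ρ _)]
    exact hfis k _

lemma mem_pi_Icc_of_nonneg_of_sum_eq {ι : Type*} [Fintype ι] {ρ : ι → ℝ} {M : ℝ}
    (hρ : ∀ j, 0 ≤ ρ j) (hsum : ∑ j, ρ j = M) : ρ ∈ univ.pi fun _ => Icc 0 M :=
  fun j _ => ⟨hρ j, hsum ▸ Finset.single_le_sum (fun i _ => hρ i) (Finset.mem_univ j)⟩

lemma exists_pos_le_of_JKOObjective_le {N : ℕ} {Δx τ β : ℝ} (hΔx : 0 < Δx) (hτ : 0 < τ)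
    (hβ : 0 < β) {E : (Fin N → ℝ) → ℝ} (hE : Continuous E) {ρk : Fin N → ℝ}
    (hM : 0 < ∑ j, ρk j) (c : ℝ) :
    ∃ ε > 0, ∀ p, JKOFeasible N Δx ρk p → JKOObjective N Δx τ β E p ≤ c → ∀ j, ε ≤ p.1 j := by
  set M := ∑ j, ρk j
  have hN : (0 : ℝ) < N := by
    rcases N.eq_zero_or_pos with rfl | hN
    · simp [M] at hM
    · exact_mod_cast hN
  obtain ⟨b, hb⟩ := (isCompact_univ_pi fun _ : Fin N => isCompact_Icc (a := 0) (b := M))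
    |>.bddBelow_image hE.continuousOn
  set C := β⁻¹ ^ 2 * τ ^ 2 / Δx ^ 2
  have hC : 0 < C := by positivity
  -- `max 0` only serves to make `fisherFloor T` monotone
  set T := max 0 (2 * (c - 2 * τ * b) / (C * Δx))
  refine ⟨(fisherFloor T)^[N - 1] (M / N), Function.Iterate.rec (fun v => 0 < v)
    (div_pos hM hN) (fun _ => fisherFloor_pos) _, fun p hp hJ j => ?_⟩
  have hEp : b ≤ E p.1 := hb (mem_image_of_mem E
    (mem_pi_Icc_of_nonneg_of_sum_eq (fun j => (hp.1 j).le) (hp.sum_fst_eq hΔx.ne')))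
  have hfis : ∀ (i : Fin N) (hi : (i : ℕ) + 1 < N),
      (log (p.1 ⟨(i : ℕ) + 1, hi⟩) - log (p.1 i)) ^ 2 * (p.1 i + p.1 ⟨(i : ℕ) + 1, hi⟩)
        ≤ T := by
    intro i hi
    refine le_max_of_le_right ((le_div_iff₀ (by positivity)).2 ?_)
    have hedge : jkoEdgeTerm N C p i ≤ ∑ i, jkoEdgeTerm N C p i :=
      Finset.single_le_sum (fun j _ => jkoEdgeTerm_nonneg hC.le hp.1 j) (Finset.mem_univ i)
    rw [jkoEdgeTerm, dif_pos hi] at hedge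
    have hcost := (mul_sq_log_sub_log_mul_add_le_jkoEdgeCost (hp.1 i) (hp.1 _)).trans hedge
    rw [JKOObjective_eq_sum_jkoEdgeTerm] at hJ
    linear_combination 2 * Δx * hcost + 2 * hJ + 4 * τ * hEp
  simpa [hp.sum_fst_eq hΔx.ne'] using iterate_fisherFloor_le hp.1 (le_max_left _ _) hfis j

lemma continuousOn_JKOObjective {N : ℕ} {Δx τ β : ℝ} {E : (Fin N → ℝ) → ℝ}
    (hE : Continuous E) : ContinuousOn (JKOObjective N Δx τ β E) {p | ∀ j, 0 < p.1 j} := by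
  simp only [funext (JKOObjective_eq_sum_jkoEdgeTerm N Δx τ β E)]
  refine ((continuousOn_finsetSum _ fun i _ => ?_).mul continuousOn_const).add (by fun_prop)
  intro p (hp : ∀ j, 0 < p.1 j)
  refine ContinuousAt.continuousWithinAt ?_
  unfold jkoEdgeTerm jkoEdgeCost
  split_ifs
  · fun_prop (disch := first | exact (hp _).ne' | exact (add_pos (hp _) (hp _)).ne')
  · exact continuousAt_const

lemma exists_isMinOn_of_sublevel_subset {α β : Type*} [TopologicalSpace α] [LinearOrder β]
    [TopologicalSpace β] [ClosedIicTopology β] {f : α → β} {S K : Set α} (hK : IsCompact K)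
    (hKS : K ⊆ S) (hf : ContinuousOn f K) {x₀ : α} (hx₀ : x₀ ∈ S)
    (hsub : ∀ x ∈ S, f x ≤ f x₀ → x ∈ K) : ∃ x ∈ S, IsMinOn f S x := by
  obtain ⟨x, hxK, hx⟩ := hK.exists_isMinOn ⟨x₀, hsub x₀ hx₀ le_rfl⟩ hf
  refine ⟨x, hKS hxK, fun y hy => ?_⟩
  rcases le_or_gt (f y) (f x₀) with h | h
  · exact hx (hsub y hy h)
  · exact (hx (hsub x₀ hx₀ le_rfl)).trans h.le

lemma exists_isMinOn_JKOObjective {N : ℕ} (hN : 1 ≤ N) {Δx τ β : ℝ} (hΔx : 0 < Δx)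
    (hτ : 0 < τ) (hβ : 0 < β) {E : (Fin N → ℝ) → ℝ} (hE : Continuous E) {ρk : Fin N → ℝ}
    (hρk : ∀ j, 0 < ρk j) :
    ∃ p ∈ {p | JKOFeasible N Δx ρk p},
      IsMinOn (JKOObjective N Δx τ β E) {p | JKOFeasible N Δx ρk p} p := by
  have hp₀ := jkoFeasible_jkoFlux hΔx.ne' hρk rfl
  obtain ⟨ε, hε, hsub⟩ := exists_pos_le_of_JKOObjective_le hΔx hτ hβ hE
    (Finset.sum_pos (fun j _ => hρk j) ⟨⟨0, hN⟩, Finset.mem_univ _⟩)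
    (JKOObjective N Δx τ β E (ρk, jkoFlux N Δx ρk ρk))
  set K := {ρ : Fin N → ℝ | (∀ j, ε ≤ ρ j) ∧ ∑ j, ρ j = ∑ j, ρk j}
  have hK : IsCompact K := by
    refine (isCompact_univ_pi fun _ => isCompact_Icc).of_isClosed_subset ?_
      fun ρ hρ => mem_pi_Icc_of_nonneg_of_sum_eq (fun j => hε.le.trans (hρ.1 j)) hρ.2
    simp only [K, ofPred_and, ofPred_forall]
    exact (isClosed_iInter fun j => isClosed_le continuous_const (continuous_apply j)).inter
      (isClosed_eq (by fun_prop) continuous_const)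
  have hKS : (fun ρ => (ρ, jkoFlux N Δx ρk ρ)) '' K ⊆ {p | JKOFeasible N Δx ρk p} := by
    rintro _ ⟨ρ, hρ, rfl⟩
    exact jkoFeasible_jkoFlux hΔx.ne' (fun j => hε.trans_le (hρ.1 j)) hρ.2
  refine exists_isMinOn_of_sublevel_subset (hK.image (continuous_id.prodMk continuous_jkoFlux))
    hKS ((continuousOn_JKOObjective hE).mono fun p hp => (hKS hp).1) hp₀ fun p hp hpJ =>
      ⟨p.1, ⟨hsub p hp hpJ, hp.sum_fst_eq hΔx.ne'⟩, Prod.ext rfl (hp.snd_eq_jkoFlux hΔx.ne').symm⟩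

/-- If the discrete energy `E` is convex and continuous and `ρᵏ_j > 0` for all `j`,
then the discrete regularized JKO problem admits a unique minimizer over all pairs
`(ρ, m)` with `ρ_j > 0` satisfying the discrete continuity constraint with data `ρᵏ`
(in particular the minimizing density is strictly positive, being feasible). -/
theorem JKO_exists_unique_minimizer (N : ℕ) (hN : 1 ≤ N) (Δx τ β : ℝ)
    (hΔx : 0 < Δx) (hτ : 0 < τ) (hβ : 0 < β)
    (E : (Fin N → ℝ) → ℝ) (hE : ConvexOn ℝ Set.univ E) (hEcont : Continuous E)
    (ρk : Fin N → ℝ) (hρk : ∀ j, 0 < ρk j) :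
    ∃! p : (Fin N → ℝ) × (Fin (N + 1) → ℝ),
      JKOFeasible N Δx ρk p ∧
        ∀ q, JKOFeasible N Δx ρk q →
          JKOObjective N Δx τ β E p ≤ JKOObjective N Δx τ β E q := by
  obtain ⟨p, hp, hmin⟩ := exists_isMinOn_JKOObjective hN hΔx hτ hβ hEcont hρk
  refine ⟨p, ⟨hp, fun q hq => hmin hq⟩, fun q ⟨hq, hqmin⟩ => ?_⟩
  exact (strictConvexOn_JKOObjective hΔx hτ hβ hE ρk).eq_of_isMinOn (fun r hr => hqmin r hr)
    hmin hq hp
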